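/- arXiv:2506.07176 — 2 statements merged into one kernel-verified Lean document; each statement's English description precedes it below -/
import Mathlib

section
/- Define Â(y) := ∫_{ℝᵈ} (1 − cos⟨z, y⟩) a(z) dz for y ∈ ℝᵈ. Then for every r > 0, the infimum of Â(y) over the set {y ∈ ℝᵈ : |y| ≥ r} is strictly positive. -/
/-!
`Â` is continuous, it is positive away from the origin because for `y ≠ 0` the zero set of
`1 - cos ⟪·, y⟫` is a countable union of hyperplanes, hence null, and by the Riemann–Lebesgue
lemma it tends to `∫ a > 0` at infinity. A continuous function that is positive on a closed set
and has a positive limit at infinity is bounded below there by a positive constant.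
-/

open MeasureTheory Complex
open scoped Real InnerProductSpace ENNReal

noncomputable section

/-- `ℝᵈ` as a Euclidean space. -/
abbrev Ed (d : ℕ) : Type := EuclideanSpace ℝ (Fin d)

open Filter Topology

theorem IsClosed.sInf_image_pos_of_tendsto_cocompact {X : Type*} [TopologicalSpace X]
    {f : X → ℝ} {s : Set X} {L : ℝ} (hs : IsClosed s) (hne : s.Nonempty) (hf : ContinuousOn f s)
    (hpos : ∀ x ∈ s, 0 < f x) (hL : 0 < L) (hlim : Tendsto f (cocompact X) (𝓝 L)) :
    0 < sInf (f '' s) := by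
  -- `min f (L / 2)` attains its infimum on `s`, since it equals `L / 2` near infinity.
  obtain ⟨x₀, hx₀⟩ := hne
  have hfar : ∀ᶠ x in cocompact X ⊓ 𝓟 s, min (f x₀) (L / 2) ≤ min (f x) (L / 2) := by
    filter_upwards [(hlim.eventually (lt_mem_nhds (half_lt_self hL))).filter_mono inf_le_left]
      with x hx
    rw [min_eq_right hx.le]
    exact min_le_right _ _
  obtain ⟨m, hm, hmin⟩ := (hf.inf continuousOn_const).exists_isMinOn' hs hx₀ hfar
  refine (lt_min (hpos m hm) (half_pos hL)).trans_le (le_csInf ⟨f x₀, x₀, hx₀, rfl⟩ ?_)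
  rintro _ ⟨x, hx, rfl⟩
  exact (hmin hx).trans (min_le_left _ _)

theorem integral_pos_of_nonneg_ae_of_not_ae_eq_zero {α : Type*} [MeasurableSpace α]
    {μ : Measure α} {f : α → ℝ} (hf : 0 ≤ᵐ[μ] f) (hfi : Integrable f μ) (hne : ¬ f =ᵐ[μ] 0) :
    0 < ∫ x, f x ∂μ :=
  (integral_nonneg_of_ae hf).lt_of_ne fun h =>
    hne ((integral_eq_zero_iff_of_nonneg_ae hf hfi).mp h.symm)

theorem re_fourierChar_smul_ofReal (t x : ℝ) :
    (Real.fourierChar (-((2 * π)⁻¹ * t)) • (x : ℂ)).re = Real.cos t * x := by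
  have h : 2 * π * -((2 * π)⁻¹ * t) = -t := by field_simp
  rw [Circle.smul_def, Real.fourierChar_apply, h, smul_eq_mul, re_mul_ofReal,
    exp_ofReal_mul_I_re, Real.cos_neg]

section InnerProductSpace

variable {E : Type*} [NormedAddCommGroup E] [InnerProductSpace ℝ E] [MeasurableSpace E]
  {μ : Measure E} {a : E → ℝ}

/-- The function `Â` of the statement, for a general measure `μ` in place of Lebesgue measure. -/
def oneSubCosIntegral (μ : Measure E) (a : E → ℝ) (y : E) : ℝ :=
  ∫ z, (1 - Real.cos ⟪z, y⟫_ℝ) * a z ∂μ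

section OpensMeasurableSpace

variable [OpensMeasurableSpace E]

theorem integrable_cos_inner_mul (ha : Integrable a μ) (y : E) :
    Integrable (fun z => Real.cos ⟪z, y⟫_ℝ * a z) μ :=
  ha.bdd_mul (c := 1) (by fun_prop) (ae_of_all _ fun z => by
    simpa only [Real.norm_eq_abs] using Real.abs_cos_le_one _)

theorem integrable_one_sub_cos_inner_mul (ha : Integrable a μ) (y : E) :
    Integrable (fun z => (1 - Real.cos ⟪z, y⟫_ℝ) * a z) μ :=
  (ha.sub (integrable_cos_inner_mul ha y)).congr (ae_of_all _ fun z => by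
    simp only [Pi.sub_apply]
    ring)

theorem oneSubCosIntegral_eq_integral_sub (ha : Integrable a μ) (y : E) :
    oneSubCosIntegral μ a y = ∫ z, a z ∂μ - ∫ z, Real.cos ⟪z, y⟫_ℝ * a z ∂μ := by
  rw [← integral_sub ha (integrable_cos_inner_mul ha y)]
  simp only [oneSubCosIntegral, sub_mul, one_mul]

theorem continuous_oneSubCosIntegral (ha : Integrable a μ) :
    Continuous (oneSubCosIntegral μ a) := by
  simp_rw [funext (oneSubCosIntegral_eq_integral_sub ha)]
  refine continuous_const.sub (continuous_of_dominated (bound := fun z => ‖a z‖)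
    (fun y => (integrable_cos_inner_mul ha y).aestronglyMeasurable) (fun y => ?_) ha.norm
    (ae_of_all _ fun z => by fun_prop))
  filter_upwards with z
  rw [norm_mul]
  exact mul_le_of_le_one_left (norm_nonneg _) (Real.abs_cos_le_one _)

end OpensMeasurableSpace

section FiniteDimensional

variable [BorelSpace E] [FiniteDimensional ℝ E]

theorem addHaar_setOf_inner_eq (μ : Measure E) [μ.IsAddHaarMeasure] {y : E} (hy : y ≠ 0)
    (c : ℝ) : μ {z : E | ⟪z, y⟫_ℝ = c} = 0 := by
  let H : AffineSubspace ℝ E := (affineSpan ℝ {c}).comap (innerSL ℝ y).toLinearMap.toAffineMap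
  have hH : (H : Set E) = {z : E | ⟪z, y⟫_ℝ = c} := by
    ext z
    simp [H, AffineSubspace.coe_comap, real_inner_comm]
  have hH_ne_top : H ≠ ⊤ := by
    intro htop
    have h0 : (0 : E) ∈ (H : Set E) := htop ▸ AffineSubspace.mem_top ℝ E 0
    have hy' : y ∈ (H : Set E) := htop ▸ AffineSubspace.mem_top ℝ E y
    rw [hH] at h0 hy'
    simp only [Set.mem_ofPred_eq, inner_zero_left, real_inner_self_eq_norm_sq] at h0 hy'
    exact hy (norm_eq_zero.mp (pow_eq_zero_iff two_ne_zero |>.mp (hy'.trans h0.symm)))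
  rw [← hH]
  exact Measure.addHaar_affineSubspace μ H hH_ne_top

theorem ae_cos_inner_ne_one (μ : Measure E) [μ.IsAddHaarMeasure] {y : E} (hy : y ≠ 0) :
    ∀ᵐ z ∂μ, Real.cos ⟪z, y⟫_ℝ ≠ 1 := by
  refine measure_mono_null (fun z hz => ?_)
    (measure_iUnion_null fun n : ℤ => addHaar_setOf_inner_eq μ hy (n * (2 * π)))
  obtain ⟨n, hn⟩ := (Real.cos_eq_one_iff _).mp (not_not.mp hz)
  exact Set.mem_iUnion.mpr ⟨n, hn.symm⟩

theorem oneSubCosIntegral_pos [μ.IsAddHaarMeasure] (ha_int : Integrable a μ)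
    (ha_nonneg : 0 ≤ᵐ[μ] a) (ha_ne : ¬ a =ᵐ[μ] 0) {y : E} (hy : y ≠ 0) :
    0 < oneSubCosIntegral μ a y := by
  refine integral_pos_of_nonneg_ae_of_not_ae_eq_zero ?_
    (integrable_one_sub_cos_inner_mul ha_int y) fun h => ha_ne ?_
  · filter_upwards [ha_nonneg] with z hz
    exact mul_nonneg (sub_nonneg.mpr (Real.cos_le_one _)) hz
  · filter_upwards [h, ae_cos_inner_ne_one μ hy] with z hz hcos
    exact (mul_eq_zero.mp hz).resolve_left (sub_ne_zero.mpr hcos.symm)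

theorem tendsto_integral_cos_inner_mul_cocompact (ha : Integrable a) :
    Tendsto (fun y => ∫ z, Real.cos ⟪z, y⟫_ℝ * a z) (cocompact E) (𝓝 0) := by
  have hscale : Tendsto (fun y : E => (2 * π)⁻¹ • y) (cocompact E) (cocompact E) :=
    (Homeomorph.smulOfNeZero _ (by positivity)).map_cocompact.le
  have hRL := (continuous_re.tendsto 0).comp
    ((tendsto_integral_exp_inner_smul_cocompact fun z => (a z : ℂ)).comp hscale)
  refine (zero_re ▸ hRL).congr fun y => ?_
  rw [Function.comp_apply, Function.comp_apply, ← RCLike.re_to_complex,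
    ← integral_re ((Real.fourierIntegral_convergent_iff _).2 ha.ofReal)]
  simp only [RCLike.re_to_complex, real_inner_smul_right, re_fourierChar_smul_ofReal]

theorem tendsto_oneSubCosIntegral_cocompact (ha : Integrable a) :
    Tendsto (oneSubCosIntegral volume a) (cocompact E) (𝓝 (∫ z, a z)) := by
  simp_rw [funext (oneSubCosIntegral_eq_integral_sub ha)]
  simpa using tendsto_const_nhds.sub (tendsto_integral_cos_inner_mul_cocompact ha)

end FiniteDimensional

end InnerProductSpace

/-- with `Â(y) = ∫ (1 − cos⟨z,y⟩) a(z) dz`, for every `r > 0` the infimum of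
`Â` over `{|y| ≥ r}` is strictly positive. -/
theorem statement4
    (d : ℕ) (hd : 1 ≤ d)
    (a : Ed d → ℝ)
    (ha_int : Integrable a (volume : Measure (Ed d)))
    (ha_nonneg : ∀ᵐ x ∂(volume : Measure (Ed d)), 0 ≤ a x)
    (ha_ne : ¬ (a =ᵐ[(volume : Measure (Ed d))] 0)) :
    ∀ r : ℝ, 0 < r →
      0 < sInf ((fun y : Ed d => ∫ z, (1 - Real.cos ⟪z, y⟫_ℝ) * a z) '' {y | r ≤ ‖y‖}) := by
  intro r hr
  have : Nontrivial (Ed d) := Module.nontrivial_of_finrank_pos (R := ℝ)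
    (by rwa [finrank_euclideanSpace_fin])
  obtain ⟨y₀, hy₀⟩ := exists_norm_eq (Ed d) hr.le
  exact IsClosed.sInf_image_pos_of_tendsto_cocompact (isClosed_le continuous_const continuous_norm)
    ⟨y₀, hy₀.ge⟩ (continuous_oneSubCosIntegral ha_int).continuousOn
    (fun y hy => oneSubCosIntegral_pos ha_int ha_nonneg ha_ne (norm_pos_iff.mp (hr.trans_le hy)))
    (integral_pos_of_nonneg_ae_of_not_ae_eq_zero ha_nonneg ha_int ha_ne)
    (tendsto_oneSubCosIntegral_cocompact ha_int)
end
end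

section
/- For ξ ∈ ℝᵈ let 𝔸(ξ) be the bounded operator on L²(Ω;ℂ) given by (𝔸(ξ)u)(x) = ∫_{ℝᵈ} a(x−y) μ(x,y) (u(x) − e^{−i⟨ξ, x−y⟩} u(y)) dy for x ∈ Ω, where u is extended ℤᵈ-periodically. If M₁(a) < ∞, then for all ξ, η ∈ Ω̃ := [−π,π)ᵈ one has the operator-norm bound ‖𝔸(ξ) − 𝔸(η)‖_{B(L²(Ω))} ≤ μ₊ M₁(a) |ξ − η|. -/
/-!
Only the phase factors distinguish `𝔸(ξ)` from `𝔸(η)`, and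
`|e^{-i⟨ξ,z⟩} - e^{-i⟨η,z⟩}| ≤ |ξ - η| |z|`. Hence `|(𝔸(ξ) - 𝔸(η)) u|` is dominated pointwise on `Ω`
by the convolution `k ⋆ |ũ|` of the kernel `k(z) = μ₊ |ξ - η| |z| a(z)` with the periodic extension
`ũ` of `u`. For a periodic function, convolution with an `L¹` kernel is bounded on `L²(Ω)` by
`‖k‖₁`: apply Cauchy–Schwarz with weight `k(x - ·)` and then unfold the integral over `ℝᵈ` into
integrals over the lattice translates of `Ω`. Finally `‖k‖₁ = μ₊ M₁(a) |ξ - η|`.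
-/

open MeasureTheory Complex
open scoped Real InnerProductSpace ENNReal

noncomputable section

/-- Inclusion of a coordinate function into `ℝᵈ`. -/
def toEd {d : ℕ} (f : Fin d → ℝ) : Ed d := WithLp.toLp 2 f

/-- The periodicity cell `Ω = [0,1)ᵈ`. -/
def cellΩ (d : ℕ) : Set (Ed d) := {x | ∀ i, x i ∈ Set.Ico (0 : ℝ) 1}

/-- Lebesgue measure restricted to `Ω`. -/
def μΩ (d : ℕ) : Measure (Ed d) := volume.restrict (cellΩ d)

/-- The `ℤᵈ`-periodic extension of a function defined (a.e.) on `Ω`. -/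
def perExt {d : ℕ} (f : Ed d → ℂ) : Ed d → ℂ := fun x => f (toEd fun i => Int.fract (x i))

open Module Submodule

theorem lintegral_mul_sq_le {α : Type*} [MeasurableSpace α] {μ : Measure α} {w g : α → ℝ≥0∞}
    (hw : AEMeasurable w μ) (hg : AEMeasurable g μ) :
    (∫⁻ a, w a * g a ∂μ) ^ 2 ≤ (∫⁻ a, w a ∂μ) * ∫⁻ a, w a * g a ^ 2 ∂μ := by
  have hsqrt : ∀ x : ℝ≥0∞, (x ^ (1 / 2 : ℝ)) ^ 2 = x := fun x => by
    rw [← ENNReal.rpow_natCast, ← ENNReal.rpow_mul]; norm_num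
  have h : ∫⁻ a, w a ^ (1 / 2 : ℝ) * (w a * g a ^ 2) ^ (1 / 2 : ℝ) ∂μ
      ≤ (∫⁻ a, w a ∂μ) ^ (1 / 2 : ℝ) * (∫⁻ a, w a * g a ^ 2 ∂μ) ^ (1 / 2 : ℝ) :=
    ENNReal.lintegral_mul_norm_pow_le hw (hw.mul (hg.pow_const 2)) (by norm_num) (by norm_num)
      (by norm_num)
  have hwg : ∀ a, w a ^ (1 / 2 : ℝ) * (w a * g a ^ 2) ^ (1 / 2 : ℝ) = w a * g a := fun a => by
    rw [ENNReal.mul_rpow_of_nonneg _ _ (by norm_num), ← mul_assoc,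
      ← ENNReal.rpow_add_of_nonneg _ _ (by norm_num) (by norm_num), ← ENNReal.rpow_natCast,
      ← ENNReal.rpow_mul]
    norm_num
  simp only [hwg] at h
  calc (∫⁻ a, w a * g a ∂μ) ^ 2
      ≤ ((∫⁻ a, w a ∂μ) ^ (1 / 2 : ℝ) * (∫⁻ a, w a * g a ^ 2 ∂μ) ^ (1 / 2 : ℝ)) ^ 2 := by gcongr
    _ = (∫⁻ a, w a ∂μ) * ∫⁻ a, w a * g a ^ 2 ∂μ := by rw [mul_pow, hsqrt, hsqrt]

theorem lintegral_sq_eq_eLpNorm_sq {α : Type*} [MeasurableSpace α] (f : α → ℝ≥0∞)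
    (ν : Measure α) :
    ∫⁻ x, f x ^ 2 ∂ν = eLpNorm f 2 ν ^ 2 := by
  simpa using (eLpNorm_nnreal_pow_eq_lintegral (f := f) (μ := ν) (p := 2) two_ne_zero).symm

section PeriodicConvolution

variable {G : Type*} [AddCommGroup G] [MeasurableSpace G] [MeasurableAdd₂ G] [MeasurableNeg G]
  {μ : Measure G} [SFinite μ] [μ.IsAddLeftInvariant]
  {L : AddSubgroup G} [Countable L] {F : Set G}

theorem setLIntegral_lintegral_sub_mul_eq (hF : IsAddFundamentalDomain L F μ) {k g : G → ℝ≥0∞}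
    (hk : Measurable k) (hg : AEMeasurable g μ) (hg_per : ∀ v ∈ L, ∀ y, g (v + y) = g y) :
    ∫⁻ x in F, ∫⁻ y, k (x - y) * g y ∂μ ∂μ = (∫⁻ z, k z ∂μ) * ∫⁻ y in F, g y ∂μ := by
  have hkF : ∀ y, ∫⁻ z, k (z - y) ∂μ = ∑' v : L, ∫⁻ x in F, k (-v + x - y) ∂μ := fun y =>
    hF.lintegral_eq_tsum' (fun z => k (z - y))
  calc ∫⁻ x in F, ∫⁻ y, k (x - y) * g y ∂μ ∂μ
      = ∫⁻ y, (∫⁻ x in F, k (x - y) ∂μ) * g y ∂μ := by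
        rw [lintegral_lintegral_swap ((hk.comp measurable_sub).aemeasurable.mul hg.comp_snd)]
        exact lintegral_congr fun y =>
          lintegral_mul_const'' _ (hk.comp (measurable_sub_const y)).aemeasurable
    _ = ∑' v : L, ∫⁻ y in F, (∫⁻ x in F, k (x - (v + y)) ∂μ) * g (v + y) ∂μ :=
        hF.lintegral_eq_tsum'' _
    _ = ∫⁻ y in F, ∑' v : L, (∫⁻ x in F, k (-v + x - y) ∂μ) * g y ∂μ := by
        rw [lintegral_tsum fun v => ?_]
        · refine tsum_congr fun v => lintegral_congr fun y => ?_
          rw [hg_per v v.2]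
          congr 1
          exact lintegral_congr fun x => congrArg k (by abel)
        · fun_prop
    _ = ∫⁻ y in F, (∫⁻ z, k z ∂μ) * g y ∂μ := by
        refine lintegral_congr fun y => ?_
        rw [ENNReal.tsum_mul_right, ← hkF, lintegral_sub_right_eq_self]
    _ = (∫⁻ z, k z ∂μ) * ∫⁻ y in F, g y ∂μ := lintegral_const_mul'' _ hg.restrict

theorem setLIntegral_sq_lintegral_sub_mul_le [μ.IsNegInvariant] (hF : IsAddFundamentalDomain L F μ)
    {k g : G → ℝ≥0∞} (hk : Measurable k) (hg : AEMeasurable g μ)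
    (hg_per : ∀ v ∈ L, ∀ y, g (v + y) = g y) :
    ∫⁻ x in F, (∫⁻ y, k (x - y) * g y ∂μ) ^ 2 ∂μ
      ≤ (∫⁻ z, k z ∂μ) ^ 2 * ∫⁻ y in F, g y ^ 2 ∂μ := by
  have hkx : ∀ x, AEMeasurable (fun y => k (x - y)) μ := fun x =>
    (hk.comp (measurable_const_sub x)).aemeasurable
  calc ∫⁻ x in F, (∫⁻ y, k (x - y) * g y ∂μ) ^ 2 ∂μ
      ≤ ∫⁻ x in F, (∫⁻ z, k z ∂μ) * ∫⁻ y, k (x - y) * g y ^ 2 ∂μ ∂μ := by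
        refine lintegral_mono fun x => ?_
        rw [← lintegral_sub_left_eq_self k x]
        exact lintegral_mul_sq_le (hkx x) hg
    _ = (∫⁻ z, k z ∂μ) * ((∫⁻ z, k z ∂μ) * ∫⁻ y in F, g y ^ 2 ∂μ) := by
        rw [lintegral_const_mul'' _ (by fun_prop),
          setLIntegral_lintegral_sub_mul_eq hF hk (hg.pow_const 2)
            fun v hv y => by rw [hg_per v hv]]
    _ = (∫⁻ z, k z ∂μ) ^ 2 * ∫⁻ y in F, g y ^ 2 ∂μ := by ring

theorem eLpNorm_lintegral_sub_mul_le [μ.IsNegInvariant] (hF : IsAddFundamentalDomain L F μ)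
    {k g : G → ℝ≥0∞} (hk : AEMeasurable k μ) (hg : AEMeasurable g μ)
    (hg_per : ∀ v ∈ L, ∀ y, g (v + y) = g y) :
    eLpNorm (fun x => ∫⁻ y, k (x - y) * g y ∂μ) 2 (μ.restrict F)
      ≤ (∫⁻ z, k z ∂μ) * eLpNorm g 2 (μ.restrict F) := by
  have hconv : (fun x => ∫⁻ y, k (x - y) * g y ∂μ) = fun x => ∫⁻ y, hk.mk k (x - y) * g y ∂μ :=
    funext fun x => lintegral_congr_ae <| by
      filter_upwards [(quasiMeasurePreserving_sub_left μ x).ae_eq_comp hk.ae_eq_mk] with y hy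
      simp only [Function.comp_apply] at hy
      rw [hy]
  rw [hconv, lintegral_congr_ae hk.ae_eq_mk, ← ENNReal.pow_le_pow_left_iff two_ne_zero, mul_pow,
    ← lintegral_sq_eq_eLpNorm_sq, ← lintegral_sq_eq_eLpNorm_sq]
  exact setLIntegral_sq_lintegral_sub_mul_le hF hk.measurable_mk hg hg_per

end PeriodicConvolution

namespace ZSpan

variable {E ι : Type*} [NormedAddCommGroup E] [NormedSpace ℝ E] [Fintype ι] (b : Basis ι ℝ E)

theorem fract_eq_sum (x : E) : fract b x = ∑ i, Int.fract (b.repr x i) • b i := by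
  conv_lhs => rw [← b.sum_repr (fract b x)]
  simp only [repr_fract_apply]

theorem measurable_fract [MeasurableSpace E] [BorelSpace E] : Measurable (fract b) := by
  have : FiniteDimensional ℝ E := b.finiteDimensional_of_finite
  rw [funext (fract_eq_sum b)]
  refine Finset.measurable_sum _ fun i _ => ?_
  exact (_root_.measurable_fract.comp
    (b.coord i).continuous_of_finiteDimensional.measurable).smul_const _

theorem quasiMeasurePreserving_fract [MeasurableSpace E] [BorelSpace E] (μ : Measure E)
    [μ.IsAddRightInvariant] :
    Measure.QuasiMeasurePreserving (fract b) μ (μ.restrict (fundamentalDomain b)) := by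
  refine ⟨measurable_fract b, .mk fun s hs hs0 => ?_⟩
  rw [Measure.restrict_apply hs] at hs0
  rw [Measure.map_apply (measurable_fract b) hs]
  have hcover : fract b ⁻¹' s
      ⊆ ⋃ v : span ℤ (Set.range b), (· - (v : E)) ⁻¹' (s ∩ fundamentalDomain b) :=
    fun x hx => Set.mem_iUnion.2 ⟨⟨floor b x, (floor b x).2⟩, hx, fract_mem_fundamentalDomain b x⟩
  refine measure_mono_null hcover (measure_iUnion_null fun v => ?_)
  simp_rw [sub_eq_add_neg]
  rwa [measure_preimage_add_right]

end ZSpan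

def cubeBasis (d : ℕ) : Basis (Fin d) ℝ (Ed d) :=
  (EuclideanSpace.basisFun (Fin d) ℝ).toBasis

def cubeLattice (d : ℕ) : AddSubgroup (Ed d) := (span ℤ (Set.range (cubeBasis d))).toAddSubgroup

instance (d : ℕ) : Countable (cubeLattice d) :=
  inferInstanceAs (Countable (span ℤ (Set.range (cubeBasis d))))

section Periodization

variable {d : ℕ}

@[simp]
theorem cubeBasis_repr_apply (x : Ed d) (i : Fin d) : (cubeBasis d).repr x i = x i := by
  simp [cubeBasis]

theorem cellΩ_eq_fundamentalDomain : cellΩ d = ZSpan.fundamentalDomain (cubeBasis d) := by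
  ext x
  simp [cellΩ, ZSpan.fundamentalDomain]

theorem isAddFundamentalDomain_cellΩ :
    IsAddFundamentalDomain (cubeLattice d) (cellΩ d) (volume : Measure (Ed d)) := by
  rw [cellΩ_eq_fundamentalDomain]
  exact ZSpan.isAddFundamentalDomain' (cubeBasis d) volume

theorem perExt_eq_comp_fract (f : Ed d → ℂ) : perExt f = f ∘ ZSpan.fract (cubeBasis d) := by
  ext x
  simp only [perExt, Function.comp_apply]
  congr 1
  ext i
  rw [← cubeBasis_repr_apply (ZSpan.fract _ x), ZSpan.repr_fract_apply, cubeBasis_repr_apply]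
  rfl

theorem perExt_add_of_mem (f : Ed d → ℂ) {v : Ed d} (hv : v ∈ cubeLattice d) (x : Ed d) :
    perExt f (v + x) = perExt f x := by
  simp only [perExt_eq_comp_fract, Function.comp_apply, ZSpan.fract_zSpan_add _ _ hv]

theorem perExt_of_mem_cellΩ (f : Ed d → ℂ) {x : Ed d} (hx : x ∈ cellΩ d) : perExt f x = f x := by
  rw [cellΩ_eq_fundamentalDomain, ← ZSpan.fract_eq_self] at hx
  rw [perExt_eq_comp_fract, Function.comp_apply, hx]

theorem MeasureTheory.AEStronglyMeasurable.perExt {f : Ed d → ℂ}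
    (hf : AEStronglyMeasurable f (μΩ d)) :
    AEStronglyMeasurable (perExt f) (volume : Measure (Ed d)) := by
  rw [perExt_eq_comp_fract]
  rw [μΩ, cellΩ_eq_fundamentalDomain] at hf
  exact hf.comp_quasiMeasurePreserving (ZSpan.quasiMeasurePreserving_fract _ volume)

theorem eLpNorm_perExt (f : Ed d → ℂ) (p : ℝ≥0∞) :
    eLpNorm (perExt f) p (μΩ d) = eLpNorm f p (μΩ d) := by
  refine eLpNorm_congr_ae ?_
  filter_upwards [ae_restrict_mem₀ isAddFundamentalDomain_cellΩ.nullMeasurableSet] with x hx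
  exact perExt_of_mem_cellΩ f hx

end Periodization

section IntegralDifference

variable {α 𝕜 : Type*} [MeasurableSpace α] {μ : Measure α} [RCLike 𝕜] {ψ U φ φ₁ φ₂ : α → 𝕜}

theorem integrable_mul_sub_mul_iff (c : 𝕜) (hψ : Integrable ψ μ) (hU : AEStronglyMeasurable U μ)
    (hφ : AEStronglyMeasurable φ μ) (hφ_norm : ∀ y, ‖φ y‖ = 1) :
    Integrable (fun y => ψ y * (c - φ y * U y)) μ ↔ Integrable (fun y => ψ y * U y) μ := by
  have hψc : Integrable (fun y => ψ y * c) μ := hψ.mul_const c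
  have hnorm : ∀ y, ‖ψ y * φ y * U y‖ = ‖ψ y * U y‖ := fun y => by
    simp only [norm_mul, hφ_norm, mul_one]
  constructor
  · intro h
    refine ((hψc.sub h).congr (.of_forall fun y => ?_)).congr' (hψ.1.mul hU) (.of_forall hnorm)
    simp only [Pi.sub_apply]
    ring
  · intro h
    have hP : Integrable (fun y => ψ y * φ y * U y) μ :=
      h.congr' ((hψ.1.mul hφ).mul hU) (.of_forall fun y => (hnorm y).symm)
    refine (hψc.sub hP).congr (.of_forall fun y => ?_)
    simp only [Pi.sub_apply]
    ring

theorem enorm_integral_mul_sub_sub_le (c : 𝕜) (hψ : Integrable ψ μ) (hU : AEStronglyMeasurable U μ)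
    (hφ₁ : AEStronglyMeasurable φ₁ μ) (hφ₂ : AEStronglyMeasurable φ₂ μ)
    (hφ₁_norm : ∀ y, ‖φ₁ y‖ = 1) (hφ₂_norm : ∀ y, ‖φ₂ y‖ = 1) :
    ‖(∫ y, ψ y * (c - φ₁ y * U y) ∂μ) - ∫ y, ψ y * (c - φ₂ y * U y) ∂μ‖ₑ
      ≤ ∫⁻ y, ‖ψ y‖ₑ * ‖φ₁ y - φ₂ y‖ₑ * ‖U y‖ₑ ∂μ := by
  have h₁ := integrable_mul_sub_mul_iff c hψ hU hφ₁ hφ₁_norm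
  have h₂ := integrable_mul_sub_mul_iff c hψ hU hφ₂ hφ₂_norm
  by_cases hψU : Integrable (fun y => ψ y * U y) μ
  · rw [← integral_sub (h₁.2 hψU) (h₂.2 hψU)]
    refine (enorm_integral_le_lintegral_enorm _).trans_eq (lintegral_congr fun y => ?_)
    rw [show ψ y * (c - φ₁ y * U y) - ψ y * (c - φ₂ y * U y) = ψ y * (φ₂ y - φ₁ y) * U y by ring,
      enorm_mul, enorm_mul, enorm_sub_rev]
  · rw [integral_undef (mt h₁.1 hψU), integral_undef (mt h₂.1 hψU), sub_zero, enorm_zero]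
    exact zero_le

end IntegralDifference

theorem norm_cexp_neg_I_inner_sub_le {E : Type*} [NormedAddCommGroup E] [InnerProductSpace ℝ E]
    (ξ η z : E) : ‖exp (-I * (⟪ξ, z⟫_ℝ : ℝ)) - exp (-I * (⟪η, z⟫_ℝ : ℝ))‖ ≤ ‖ξ - η‖ * ‖z‖ := by
  set s := ⟪ξ, z⟫_ℝ
  set t := ⟪η, z⟫_ℝ
  have hfactor : exp (-I * s) - exp (-I * t) = exp (-I * t) * (exp (I * ↑(t - s)) - 1) := by
    rw [mul_sub, ← Complex.exp_add]; push_cast; ring_nf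
  have hts : ‖t - s‖ ≤ ‖ξ - η‖ * ‖z‖ := by
    rw [norm_sub_rev, show s - t = ⟪ξ - η, z⟫_ℝ from (inner_sub_left ξ η z).symm]
    exact norm_inner_le_norm _ _
  rw [hfactor, norm_mul, show -I * (t : ℂ) = ((-t : ℝ) : ℂ) * I by push_cast; ring,
    norm_exp_ofReal_mul_I, one_mul]
  exact Real.norm_exp_I_mul_ofReal_sub_one_le.trans hts

theorem enorm_integral_phase_sub_le {E : Type*} [NormedAddCommGroup E] [InnerProductSpace ℝ E]
    [MeasurableSpace E] [BorelSpace E] {μ : Measure E} [μ.IsAddLeftInvariant] [μ.IsNegInvariant]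
    {a : E → ℝ} {w : E → E → ℝ} {μp : ℝ} {U : E → ℂ} (x ξ η : E)
    (ha : Integrable a μ) (hw_meas : Measurable (w x)) (hw : ∀ y, |w x y| ≤ μp)
    (hU : AEStronglyMeasurable U μ) :
    ‖(∫ y, ((a (x - y) * w x y : ℝ) : ℂ) * (U x - exp (-I * (⟪ξ, x - y⟫_ℝ : ℝ)) * U y) ∂μ)
        - ∫ y, ((a (x - y) * w x y : ℝ) : ℂ) * (U x - exp (-I * (⟪η, x - y⟫_ℝ : ℝ)) * U y) ∂μ‖ₑ
      ≤ ∫⁻ y, ENNReal.ofReal (μp * ‖ξ - η‖ * (‖x - y‖ * |a (x - y)|)) * ‖U y‖ₑ ∂μ := by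
  have hψ : Integrable (fun y => ((a (x - y) * w x y : ℝ) : ℂ)) μ :=
    ((ha.comp_sub_left x).mul_bdd hw_meas.aestronglyMeasurable (.of_forall hw)).ofReal
  have hphase : ∀ ζ : E, Continuous fun y => exp (-I * (⟪ζ, x - y⟫_ℝ : ℝ)) := fun ζ => by
    fun_prop
  have hphase_norm : ∀ (ζ y : E), ‖exp (-I * (⟪ζ, x - y⟫_ℝ : ℝ))‖ = 1 := fun ζ y => by
    rw [show -I * ((⟪ζ, x - y⟫_ℝ : ℝ) : ℂ) = ((-⟪ζ, x - y⟫_ℝ : ℝ) : ℂ) * I by push_cast; ring]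
    exact norm_exp_ofReal_mul_I _
  refine (enorm_integral_mul_sub_sub_le (U x) hψ hU (hphase ξ).aestronglyMeasurable
    (hphase η).aestronglyMeasurable (hphase_norm ξ) (hphase_norm η)).trans
    (lintegral_mono fun y => ?_)
  gcongr ?_ * _
  rw [← ofReal_norm, ← ofReal_norm, ← ENNReal.ofReal_mul (norm_nonneg _)]
  refine ENNReal.ofReal_le_ofReal ?_
  calc ‖((a (x - y) * w x y : ℝ) : ℂ)‖
        * ‖exp (-I * (⟪ξ, x - y⟫_ℝ : ℝ)) - exp (-I * (⟪η, x - y⟫_ℝ : ℝ))‖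
      ≤ (|a (x - y)| * μp) * (‖ξ - η‖ * ‖x - y‖) := by
        rw [norm_real, Real.norm_eq_abs, abs_mul]
        have hμp : 0 ≤ μp := (abs_nonneg _).trans (hw y)
        gcongr
        · exact hw y
        · exact norm_cexp_neg_I_inner_sub_le ξ η (x - y)
    _ = μp * ‖ξ - η‖ * (‖x - y‖ * |a (x - y)|) := by ring

theorem lintegral_ofReal_mul_norm_mul_abs {E : Type*} [NormedAddCommGroup E] [MeasurableSpace E]
    {μ : Measure E} {a : E → ℝ} {c : ℝ} (hc : 0 ≤ c) (ha_nonneg : ∀ᵐ x ∂μ, 0 ≤ a x)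
    (hM1 : Integrable (fun x => ‖x‖ * a x) μ) :
    ∫⁻ z, ENNReal.ofReal (c * (‖z‖ * |a z|)) ∂μ = ENNReal.ofReal (c * ∫ x, ‖x‖ * a x ∂μ) := by
  have habs : ∀ᵐ z ∂μ, c * (‖z‖ * |a z|) = c * (‖z‖ * a z) := by
    filter_upwards [ha_nonneg] with z hz
    rw [abs_of_nonneg hz]
  rw [lintegral_congr_ae (habs.mono fun z hz => congrArg ENNReal.ofReal hz),
    ← ofReal_integral_eq_lintegral_ofReal (hM1.const_mul c)
      (by filter_upwards [ha_nonneg] with z hz using by positivity), integral_const_mul]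

theorem ContinuousLinearMap.opNorm_le_of_eLpNorm_le {α β E F 𝕜 : Type*} [MeasurableSpace α]
    [MeasurableSpace β] {μ : Measure α} {ν : Measure β} {p : ℝ≥0∞} [Fact (1 ≤ p)]
    [NontriviallyNormedField 𝕜] [NormedAddCommGroup E] [NormedSpace 𝕜 E] [NormedAddCommGroup F]
    [NormedSpace 𝕜 F] (T : Lp E p μ →L[𝕜] Lp F p ν) {C : ℝ} (hC : 0 ≤ C)
    (hT : ∀ u, eLpNorm (T u) p ν ≤ ENNReal.ofReal C * eLpNorm u p μ) : ‖T‖ ≤ C := by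
  refine T.opNorm_le_bound hC fun u => ?_
  rw [Lp.norm_def, Lp.norm_def, ← ENNReal.toReal_ofReal hC, ← ENNReal.toReal_mul]
  exact ENNReal.toReal_mono (ENNReal.mul_ne_top ENNReal.ofReal_ne_top (Lp.eLpNorm_ne_top u)) (hT u)

theorem statement8_general
    (d : ℕ)
    (a : Ed d → ℝ) (w : Ed d → Ed d → ℝ) (μm μp : ℝ)
    (ha_int : Integrable a (volume : Measure (Ed d)))
    (ha_nonneg : ∀ᵐ x ∂(volume : Measure (Ed d)), 0 ≤ a x)
    (hw_meas : Measurable (Function.uncurry w))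
    (hμm : 0 < μm)
    (hw_bdd : ∀ x y, μm ≤ w x y ∧ w x y ≤ μp)
    (hM1 : Integrable (fun x => ‖x‖ * a x) (volume : Measure (Ed d)))
    -- the family of fibre operators 𝔸(ξ) on L²(Ω)
    (A : Ed d → (Lp ℂ 2 (μΩ d) →L[ℂ] Lp ℂ 2 (μΩ d)))
    (hA : ∀ (ξ : Ed d) (u : Lp ℂ 2 (μΩ d)), ∀ᵐ x ∂(μΩ d),
      (A ξ u : Ed d → ℂ) x
        = ∫ y, ((a (x - y) * w x y : ℝ) : ℂ)
            * (perExt (u : Ed d → ℂ) x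
               - Complex.exp (-Complex.I * (⟪ξ, x - y⟫_ℝ : ℝ)) * perExt (u : Ed d → ℂ) y)) :
    ∀ ξ η : Ed d, (∀ i, ξ i ∈ Set.Ico (-π) π) → (∀ i, η i ∈ Set.Ico (-π) π) →
      ‖A ξ - A η‖ ≤ μp * (∫ x, ‖x‖ * a x) * ‖ξ - η‖ := by
  intro ξ η _ _
  have hw_abs : ∀ x y, |w x y| ≤ μp := fun x y =>
    abs_le.2 ⟨by linarith [hw_bdd x y], (hw_bdd x y).2⟩
  have hC : 0 ≤ μp * ‖ξ - η‖ := mul_nonneg ((abs_nonneg _).trans (hw_abs 0 0)) (norm_nonneg _)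
  have hM1_nonneg : 0 ≤ ∫ x, ‖x‖ * a x :=
    integral_nonneg_of_ae (by filter_upwards [ha_nonneg] with x hx using by positivity)
  set k : Ed d → ℝ≥0∞ := fun z => ENNReal.ofReal (μp * ‖ξ - η‖ * (‖z‖ * |a z|))
  have hbound_nonneg : 0 ≤ μp * (∫ x, ‖x‖ * a x) * ‖ξ - η‖ := by
    rw [mul_right_comm]
    exact mul_nonneg hC hM1_nonneg
  refine (A ξ - A η).opNorm_le_of_eLpNorm_le hbound_nonneg fun u => ?_
  set U := perExt (u : Ed d → ℂ)
  have hU : AEStronglyMeasurable U volume := (Lp.aestronglyMeasurable u).perExt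
  have hpointwise : ∀ᵐ x ∂μΩ d,
      ‖((A ξ - A η) u : Ed d → ℂ) x‖ₑ ≤ ‖∫⁻ y, k (x - y) * ‖U y‖ₑ‖ₑ := by
    filter_upwards [hA ξ u, hA η u, Lp.coeFn_sub (A ξ u) (A η u)] with x hξ hη hsub
    rw [sub_apply, hsub, Pi.sub_apply, hξ, hη, enorm_eq_self]
    exact enorm_integral_phase_sub_le x ξ η ha_int hw_meas.of_uncurry_left (hw_abs x) hU
  calc eLpNorm ((A ξ - A η) u) 2 (μΩ d)
      ≤ eLpNorm (fun x => ∫⁻ y, k (x - y) * ‖U y‖ₑ) 2 (μΩ d) := eLpNorm_mono_enorm_ae hpointwise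
    _ ≤ (∫⁻ z, k z) * eLpNorm (fun y => ‖U y‖ₑ) 2 (μΩ d) :=
        eLpNorm_lintegral_sub_mul_le isAddFundamentalDomain_cellΩ (by fun_prop) hU.enorm
          fun v hv y => by simp only [U, perExt_add_of_mem _ hv]
    _ = ENNReal.ofReal (μp * (∫ x, ‖x‖ * a x) * ‖ξ - η‖) * eLpNorm u 2 (μΩ d) := by
        rw [lintegral_ofReal_mul_norm_mul_abs hC ha_nonneg hM1, eLpNorm_enorm, eLpNorm_perExt,
          mul_right_comm]

/-- Lipschitz bound `‖𝔸(ξ) − 𝔸(η)‖ ≤ μ₊ M₁(a) |ξ − η|` for `ξ, η ∈ [−π,π)ᵈ`. -/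
theorem statement8
    (d : ℕ) (hd : 1 ≤ d)
    (a : Ed d → ℝ) (w : Ed d → Ed d → ℝ) (μm μp : ℝ)
    (ha_int : Integrable a (volume : Measure (Ed d)))
    (ha_nonneg : ∀ᵐ x ∂(volume : Measure (Ed d)), 0 ≤ a x)
    (ha_ne : ¬ (a =ᵐ[(volume : Measure (Ed d))] 0))
    (hw_meas : Measurable (Function.uncurry w))
    (hμm : 0 < μm)
    (hw_bdd : ∀ x y, μm ≤ w x y ∧ w x y ≤ μp)
    (hw_per : ∀ (x y : Ed d) (m n : Fin d → ℤ),
      w (x + toEd fun i => (m i : ℝ)) (y + toEd fun i => (n i : ℝ)) = w x y)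
    (hM1 : Integrable (fun x => ‖x‖ * a x) (volume : Measure (Ed d)))
    -- the family of fibre operators 𝔸(ξ) on L²(Ω)
    (A : Ed d → (Lp ℂ 2 (μΩ d) →L[ℂ] Lp ℂ 2 (μΩ d)))
    (hA : ∀ (ξ : Ed d) (u : Lp ℂ 2 (μΩ d)), ∀ᵐ x ∂(μΩ d),
      (A ξ u : Ed d → ℂ) x
        = ∫ y, ((a (x - y) * w x y : ℝ) : ℂ)
            * (perExt (u : Ed d → ℂ) x
               - Complex.exp (-Complex.I * (⟪ξ, x - y⟫_ℝ : ℝ)) * perExt (u : Ed d → ℂ) y)) :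
    ∀ ξ η : Ed d, (∀ i, ξ i ∈ Set.Ico (-π) π) → (∀ i, η i ∈ Set.Ico (-π) π) →
      ‖A ξ - A η‖ ≤ μp * (∫ x, ‖x‖ * a x) * ‖ξ - η‖ :=
  statement8_general d a w μm μp ha_int ha_nonneg hw_meas hμm hw_bdd hM1 A hA
end
end
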